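/- Let A be the k-subalgebra of End_k(R) generated by { λ_r : r ∈ R } together with ∂^{β^{−1}}, ∂, and ∂^β (A equals the ring D_q of q-differential operators on k[x]). Then A is a domain: if φ, ψ ∈ A and φ∘ψ = 0, then φ = 0 or ψ = 0. -/

import Mathlib

open Polynomial

noncomputable section

namespace QDiff1

variable (k : Type*) [Field k]

/-- Left multiplication operator `λ_r`. -/
def lmul (r : k[X]) : Module.End k k[X] := LinearMap.mulLeft k r

variable {k}

/-- The automorphism `σ_a`, acting on `x^b` by `q^(a*b)`. -/
def sigma (q : k) (a : ℤ) : Module.End k k[X] :=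
  (aeval (C (q ^ a) * X) : k[X] →ₐ[k] k[X]).toLinearMap

/-- The operator `∂^{β^a}`, sending `x^b` to `(1 + q^a + ⋯ + q^{a(b-1)}) x^(b-1)`. -/
def dq (q : k) (a : ℤ) : Module.End k k[X] :=
  (Polynomial.basisMonomials k).constr k
    fun b => (∑ i ∈ Finset.range b, q ^ (a * (i : ℤ))) • X ^ (b - 1)

/-- `φ` is homogeneous of degree `a : ℤ`. -/
def IsHomog (a : ℤ) (φ : Module.End k k[X]) : Prop :=
  ∀ b : ℕ, ∃ c : k, φ (X ^ b) = c • (if 0 ≤ a + (b : ℤ) then X ^ (a + (b : ℤ)).toNat else 0)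

/-- `M` is closed under `φ ↦ λ_r ∘ φ ∘ λ_s`. -/
def Closed (M : Submodule k (Module.End k k[X])) : Prop :=
  ∀ r s : k[X], ∀ φ ∈ M, lmul k r * φ * lmul k s ∈ M

/-- The filtration `D_q^n` of `q`-differential operators on `k[x]`. -/
def Dq (q : k) : ℕ → Submodule k (Module.End k k[X])
  | 0 => sInf {M | Closed M ∧
      {φ : Module.End k k[X] | ∃ a : ℤ, IsHomog a φ ∧ ∀ b : ℕ,
        φ * lmul k (X ^ b) = q ^ (a * (b : ℤ)) • (lmul k (X ^ b) * φ)} ⊆ ↑M}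
  | n + 1 => sInf {M | Closed M ∧ Dq q n ≤ M ∧
      {φ : Module.End k k[X] | ∃ a : ℤ, IsHomog a φ ∧ ∀ b : ℕ,
        φ * lmul k (X ^ b) - q ^ (a * (b : ℤ)) • (lmul k (X ^ b) * φ) ∈ Dq q n} ⊆ ↑M}

end QDiff1

/-!
Every operator `φ` of the algebra acts on monomials by `φ (X ^ b) = ∑ d, s_d(b) X ^ (b + d)`,
where each `s_d` is an exponential polynomial `b ↦ ∑ j, p_j(b) q ^ (j b)`, i.e. the value at `b`
of a Laurent polynomial in `T` over `k[t]` under `t ↦ b`, `T ↦ q ^ b`. Composition multiplies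
these symbols after shifting the argument of the left factor by the degree of the right one, so
the top-degree symbol of `φ ∘ ψ` is a product of two nonzero elements of a domain. Since `q` is not
a root of unity, an exponential polynomial vanishing at all large `b` is zero, so an operator
vanishes exactly when its symbol does.
-/

open Filter

namespace Polynomial

theorem degree_taylor_sub_lt {R : Type*} [Ring R] {p : R[X]} (hp : p ≠ 0) (r : R) :
    (taylor r p - p).degree < p.degree :=
  degree_taylor p r ▸ degree_sub_lt_left (degree_taylor p r) ((taylor_eq_zero r p).not.mpr hp)
    (leadingCoeff_taylor r p)

variable {R : Type*} [CommRing R]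

theorem eq_zero_of_C_mul_taylor_sub_C_mul_eq_zero [IsDomain R] {p : R[X]} {a c r : R}
    (hac : a ≠ c) (h : C a * taylor r p - C c * p = 0) : p = 0 := by
  have := congrArg (coeff · p.natDegree) h
  simp only [coeff_sub, coeff_C_mul, coeff_taylor_natDegree, coeff_natDegree, coeff_zero] at this
  rw [← sub_mul, mul_eq_zero, sub_eq_zero] at this
  exact leadingCoeff_eq_zero.mp (this.resolve_left hac)

theorem eq_zero_of_eventually_eval_natCast_eq_zero [IsDomain R] [CharZero R] {p : R[X]}
    (h : ∀ᶠ b : ℕ in atTop, p.eval (b : R) = 0) : p = 0 := by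
  refine eq_zero_of_infinite_isRoot p ?_
  have hinf : {b : ℕ | p.eval (b : R) = 0}.Infinite :=
    Nat.frequently_atTop_iff_infinite.mp h.frequently
  exact (hinf.image Nat.cast_injective.injOn).mono (by rintro _ ⟨b, hb, rfl⟩; exact hb)

variable {ι : Type*} {x : ι → R} {p : ι → R[X]}

theorem eventually_sum_eval_C_mul_taylor_sub_mul_pow_eq_zero {s : Finset ι} (c : R)
    (h : ∀ᶠ b : ℕ in atTop, ∑ i ∈ s, (p i).eval (b : R) * x i ^ b = 0) :
    ∀ᶠ b : ℕ in atTop,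
      ∑ i ∈ s, (C (x i) * taylor 1 (p i) - C c * p i).eval (b : R) * x i ^ b = 0 := by
  filter_upwards [h, (tendsto_add_atTop_nat 1).eventually h] with b hb hb1
  calc ∑ i ∈ s, (C (x i) * taylor 1 (p i) - C c * p i).eval (b : R) * x i ^ b
      = ∑ i ∈ s, (p i).eval ((b + 1 : ℕ) : R) * x i ^ (b + 1)
          - c * ∑ i ∈ s, (p i).eval (b : R) * x i ^ b := by
        rw [Finset.mul_sum, ← Finset.sum_sub_distrib]
        refine Finset.sum_congr rfl fun i _ => ?_
        simp only [eval_sub, eval_mul, eval_C, taylor_eval, Nat.cast_succ, pow_succ]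
        ring
    _ = 0 := by rw [hb, hb1, mul_zero, sub_zero]

theorem eq_zero_of_eventually_sum_eval_mul_pow_eq_zero [IsDomain R] [CharZero R] (s : Finset ι)
    (hx : Set.InjOn x s) (hx0 : ∀ i ∈ s, x i ≠ 0)
    (h : ∀ᶠ b : ℕ in atTop, ∑ i ∈ s, (p i).eval (b : R) * x i ^ b = 0) : ∀ i ∈ s, p i = 0 := by
  classical
  induction s using Finset.induction_on generalizing p with
  | empty => simp
  | insert i₀ s hi₀ ih =>
    have hxs : Set.InjOn x s := hx.mono (by simp)
    have hx₀ : x i₀ ≠ 0 := hx0 i₀ (Finset.mem_insert_self _ _)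
    -- Passing from `f b` to `f (b + 1) - x i₀ * f b` lowers the degree of `p i₀` and multiplies
    -- the leading coefficient of every other `p i` by `x i - x i₀ ≠ 0`.
    suffices H : ∀ n : WithBot ℕ, ∀ p : ι → R[X], (p i₀).degree = n →
        (∀ᶠ b : ℕ in atTop, ∑ i ∈ insert i₀ s, (p i).eval (b : R) * x i ^ b = 0) →
        ∀ i ∈ insert i₀ s, p i = 0 from H _ p rfl h
    intro n
    induction n using WellFoundedLT.induction with
    | _ n IH =>
    intro p hn hp
    by_cases h0 : p i₀ = 0
    · have hs := ih hxs (fun i hi => hx0 i (Finset.mem_insert_of_mem hi))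
        (by simpa [Finset.sum_insert hi₀, h0] using hp)
      simpa [h0] using hs
    set p' := fun i => C (x i) * taylor 1 (p i) - C (x i₀) * p i
    have hdeg : (p' i₀).degree < n := by
      rw [← hn, show p' i₀ = C (x i₀) * (taylor 1 (p i₀) - p i₀) by simp only [p']; ring,
        degree_C_mul hx₀]
      exact degree_taylor_sub_lt h0 1
    have hp' := IH _ hdeg p' rfl (eventually_sum_eval_C_mul_taylor_sub_mul_pow_eq_zero (x i₀) hp)
    have hs : ∀ i ∈ s, p i = 0 := fun i hi =>
      eq_zero_of_C_mul_taylor_sub_C_mul_eq_zero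
        (fun he => hi₀ (hx (Finset.mem_insert_of_mem hi) (Finset.mem_insert_self _ _) he ▸ hi))
        (hp' i (Finset.mem_insert_of_mem hi))
    refine absurd (eq_zero_of_eventually_eval_natCast_eq_zero ?_) h0
    filter_upwards [hp] with b hb
    rw [Finset.sum_insert hi₀, Finset.sum_eq_zero (fun i hi => by simp [hs i hi]), add_zero] at hb
    exact (mul_eq_zero.mp hb).resolve_right (pow_ne_zero _ hx₀)

end Polynomial

namespace LaurentPolynomial

theorem ringHom_ext {R S : Type*} [CommSemiring R] [Semiring S] {F G : R[T;T⁻¹] →+* S}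
    (hC : ∀ a, F (C a) = G (C a)) (hT : F (T 1) = G (T 1)) : F = G := by
  refine IsLocalization.ringHom_ext (Submonoid.powers (X : R[X])) (Polynomial.ringHom_ext ?_ ?_)
  · intro a
    simpa [algebraMap_eq_toLaurent] using hC a
  · simpa [algebraMap_eq_toLaurent] using hT

end LaurentPolynomial

theorem Transcendental.not_isOfFinOrder {R A : Type*} [CommRing R] [Nontrivial R] [Ring A]
    [Algebra R A] {u : Aˣ} (h : Transcendental R (u : A)) : ¬IsOfFinOrder u := by
  rw [isOfFinOrder_iff_pow_eq_one]
  rintro ⟨n, hn, hu⟩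
  exact h (IsAlgebraic.of_pow hn (by simpa [← Units.val_pow_eq_pow_val, hu] using isAlgebraic_one))

namespace QDiff1

variable {k : Type*} [Field k]

abbrev Symb (k : Type*) [Field k] := LaurentPolynomial k[X]

def evAt (u : kˣ) (b : ℤ) : Symb k →+* k :=
  LaurentPolynomial.eval₂ (Polynomial.evalRingHom (b : k)) (u ^ b)

def shiftUnit (u : kˣ) (c : ℤ) : (Symb k)ˣ :=
  (((u ^ c).isUnit.map (LaurentPolynomial.C.comp Polynomial.C)).mul
    (LaurentPolynomial.isUnit_T 1)).unit

def shift (u : kˣ) (c : ℤ) : Symb k →+* Symb k :=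
  LaurentPolynomial.eval₂ (LaurentPolynomial.C.comp (taylorAlgHom (c : k)).toRingHom)
    (shiftUnit u c)

theorem evAt_C (u : kˣ) (b : ℤ) (p : k[X]) :
    evAt u b (LaurentPolynomial.C p) = p.eval (b : k) := by
  simp [evAt]

theorem evAt_T (u : kˣ) (b n : ℤ) : evAt u b (LaurentPolynomial.T n) = ((u : k) ^ b) ^ n := by
  simp [evAt]

theorem evAt_shift (u : kˣ) (b c : ℤ) (f : Symb k) :
    evAt u b (shift u c f) = evAt u (b + c) f := by
  rw [← RingHom.comp_apply]
  congr 1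
  refine LaurentPolynomial.ringHom_ext (fun p => ?_) ?_
  · simp [shift, evAt, taylor_eval]
  · simp [shift, evAt, shiftUnit, zpow_add₀ u.ne_zero]
    ring

theorem evAt_natCast_eq_sum (u : kˣ) (b : ℕ) (f : Symb k) :
    evAt u b f = ∑ j ∈ f.coeff.support, (f.coeff j).eval (b : k) * ((u : k) ^ j) ^ b := by
  conv_lhs => rw [← AddMonoidAlgebra.sum_coeff_single f]
  rw [Finsupp.sum, map_sum]
  refine Finset.sum_congr rfl fun j _ => ?_
  rw [LaurentPolynomial.single_eq_C_mul_T, map_mul, evAt_C, evAt_T, Int.cast_natCast,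
    ← zpow_natCast, ← zpow_mul, ← zpow_mul, mul_comm (b : ℤ) j]

theorem zpow_val_injective {u : kˣ} (hu : ¬IsOfFinOrder u) :
    Function.Injective fun j : ℤ => (u : k) ^ j := fun i j hij =>
  injective_zpow_iff_not_isOfFinOrder.mpr hu (Units.val_injective (by simpa using hij))

theorem eq_zero_of_eventually_evAt_eq_zero [CharZero k] {u : kˣ} (hu : ¬IsOfFinOrder u)
    {f : Symb k} (h : ∀ᶠ b : ℕ in atTop, evAt u b f = 0) : f = 0 := by
  have hf := Polynomial.eq_zero_of_eventually_sum_eval_mul_pow_eq_zero _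
    (zpow_val_injective hu).injOn (fun j _ => zpow_ne_zero j u.ne_zero)
    (by simpa only [evAt_natCast_eq_sum] using h)
  refine LaurentPolynomial.ext fun j => ?_
  by_cases hj : j ∈ f.coeff.support
  · simpa using hf j hj
  · simpa using hj

theorem shift_injective [CharZero k] {u : kˣ} (hu : ¬IsOfFinOrder u) (c : ℤ) :
    Function.Injective (shift u c) :=
  (injective_iff_map_eq_zero _).mpr fun f hf => eq_zero_of_eventually_evAt_eq_zero hu <|
    Eventually.of_forall fun b => by simpa [hf] using (evAt_shift u (b - c) c f).symm

/-- Since `(b + d).toNat` is `0` when `b + d < 0`, the coefficients there are required to vanish. -/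
structure IsSymbol (u : kˣ) (s : ℤ →₀ Symb k) (φ : Module.End k k[X]) : Prop where
  evAt_eq_zero : ∀ b d : ℤ, 0 ≤ b → b + d < 0 → evAt u b (s d) = 0
  apply_X_pow : ∀ b : ℕ, φ (X ^ b) = s.sum fun d c => evAt u b c • X ^ ((b : ℤ) + d).toNat

def symbMul (u : kˣ) (s t : ℤ →₀ Symb k) : ℤ →₀ Symb k :=
  s.sum fun d c => t.sum fun e c' => Finsupp.single (d + e) (shift u e c * c')

theorem symbMul_apply_add {u : kˣ} {s t : ℤ →₀ Symb k} {d e : ℤ} (hs : ∀ d', s d' ≠ 0 → d' ≤ d)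
    (ht : ∀ e', t e' ≠ 0 → e' ≤ e) : symbMul u s t (d + e) = shift u e (s d) * t e := by
  simp only [symbMul, Finsupp.sum_apply, Finsupp.single_apply]
  rw [Finsupp.sum_eq_single d]
  · rw [Finsupp.sum_eq_single e]
    · simp
    · intro e' _ he'
      rw [if_neg (by omega)]
    · simp
  · intro d' hd' hne
    refine Finset.sum_eq_zero fun e' he' => if_neg ?_
    have := hs d' hd'
    have := ht e' (Finsupp.mem_support_iff.mp he')
    omega
  · simp

theorem eq_zero_or_eq_zero_of_symbMul_eq_zero [CharZero k] {u : kˣ} (hu : ¬IsOfFinOrder u)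
    {s t : ℤ →₀ Symb k} (h : symbMul u s t = 0) : s = 0 ∨ t = 0 := by
  by_contra! hst
  obtain ⟨hs, ht⟩ := hst
  have hs' := Finsupp.support_nonempty_iff.mpr hs
  have ht' := Finsupp.support_nonempty_iff.mpr ht
  have hlead := symbMul_apply_add (u := u) (d := s.support.max' hs') (e := t.support.max' ht')
    (fun d' hd' => s.support.le_max' d' (Finsupp.mem_support_iff.mpr hd'))
    (fun e' he' => t.support.le_max' e' (Finsupp.mem_support_iff.mpr he'))
  rw [h, Finsupp.zero_apply, eq_comm] at hlead
  refine mul_ne_zero ?_ (Finsupp.mem_support_iff.mp (t.support.max'_mem ht')) hlead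
  exact (map_ne_zero_iff _ (shift_injective hu _)).mpr
    (Finsupp.mem_support_iff.mp (s.support.max'_mem hs'))

namespace IsSymbol

variable {u : kˣ} {s t : ℤ →₀ Symb k} {φ ψ : Module.End k k[X]}

theorem add (hs : IsSymbol u s φ) (ht : IsSymbol u t ψ) : IsSymbol u (s + t) (φ + ψ) where
  evAt_eq_zero b d hb hbd := by
    simp [hs.evAt_eq_zero b d hb hbd, ht.evAt_eq_zero b d hb hbd]
  apply_X_pow b := by
    rw [LinearMap.add_apply, hs.apply_X_pow, ht.apply_X_pow,
      Finsupp.sum_add_index' (by simp) (by simp [add_smul])]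

theorem mul (hs : IsSymbol u s φ) (ht : IsSymbol u t ψ) : IsSymbol u (symbMul u s t) (φ * ψ) where
  evAt_eq_zero b d hb hbd := by
    simp only [symbMul, Finsupp.sum_apply, Finsupp.single_apply, map_finsuppSum]
    refine Finset.sum_eq_zero fun d' _ => Finset.sum_eq_zero fun e _ => ?_
    dsimp only
    split_ifs with he
    · rw [map_mul, evAt_shift]
      rcases lt_or_ge (b + e) 0 with hbe | hbe
      · rw [ht.evAt_eq_zero b e hb hbe, mul_zero]
      · rw [hs.evAt_eq_zero (b + e) d' hbe (by omega), zero_mul]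
    · exact map_zero _
  apply_X_pow b := by
    have hterm : ∀ e, evAt u b (t e) • φ (X ^ ((b : ℤ) + e).toNat) =
        s.sum fun d c => evAt u b (shift u e c * t e) • X ^ ((b : ℤ) + (d + e)).toNat := by
      intro e
      rcases lt_or_ge ((b : ℤ) + e) 0 with hbe | hbe
      · simp [ht.evAt_eq_zero b e (by positivity) hbe]
      · rw [hs.apply_X_pow, Finsupp.smul_sum]
        refine Finsupp.sum_congr fun d _ => ?_
        rw [smul_smul, map_mul, evAt_shift, Int.toNat_of_nonneg hbe, mul_comm, add_comm d e,
          add_assoc]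
    have hzero : ∀ d : ℤ, evAt u b 0 • (X : k[X]) ^ ((b : ℤ) + d).toNat = 0 := by simp
    have hadd : ∀ (d : ℤ) (c c' : Symb k), evAt u b (c + c') • (X : k[X]) ^ ((b : ℤ) + d).toNat =
        evAt u b c • X ^ ((b : ℤ) + d).toNat + evAt u b c' • X ^ ((b : ℤ) + d).toNat := by
      simp [add_smul]
    rw [Module.End.mul_apply, ht.apply_X_pow, map_finsuppSum]
    simp only [map_smul]
    rw [Finsupp.sum_congr (g2 := fun e c' => s.sum fun d c =>
        evAt u b (shift u e c * c') • X ^ ((b : ℤ) + (d + e)).toNat) fun e _ => hterm e, symbMul,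
      Finsupp.sum_sum_index hzero hadd, Finsupp.sum_comm]
    refine Finsupp.sum_congr fun d _ => ?_
    rw [Finsupp.sum_sum_index hzero hadd]
    exact Finsupp.sum_congr fun e _ => by rw [Finsupp.sum_single_index (hzero _)]

theorem evAt_eq_coeff (hs : IsSymbol u s φ) {b : ℕ} {d : ℤ} (hbd : 0 ≤ (b : ℤ) + d) :
    evAt u b (s d) = (φ (X ^ b)).coeff ((b : ℤ) + d).toNat := by
  rw [hs.apply_X_pow, Finsupp.sum, Polynomial.finsetSum_coeff, Finset.sum_eq_single d]
  · simp
  · intro d' _ hd'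
    rcases lt_or_ge ((b : ℤ) + d') 0 with hbd' | hbd'
    · simp [hs.evAt_eq_zero b d' (by positivity) hbd']
    · rw [Polynomial.coeff_smul, Polynomial.coeff_X_pow, if_neg (by omega), smul_zero]
  · simp +contextual

theorem eq_zero_iff [CharZero k] (hu : ¬IsOfFinOrder u) (hs : IsSymbol u s φ) :
    φ = 0 ↔ s = 0 := by
  constructor
  · rintro rfl
    ext d : 1
    refine eq_zero_of_eventually_evAt_eq_zero hu ?_
    filter_upwards [eventually_ge_atTop (-d).toNat] with b hb
    rw [hs.evAt_eq_coeff (by omega)]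
    simp
  · rintro rfl
    refine (Polynomial.basisMonomials k).ext fun b => ?_
    simp [← Polynomial.X_pow_eq_monomial, hs.apply_X_pow]

end IsSymbol

section Generators

variable {u : kˣ} {φ : Module.End k k[X]}

theorem isSymbol_single {d : ℤ} {c : Symb k} (hc : ∀ b : ℤ, 0 ≤ b → b + d < 0 → evAt u b c = 0)
    (hφ : ∀ b : ℕ, φ (X ^ b) = evAt u b c • X ^ ((b : ℤ) + d).toNat) :
    IsSymbol u (Finsupp.single d c) φ where
  evAt_eq_zero b d' hb hbd' := by
    rw [Finsupp.single_apply]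
    split_ifs with h
    · exact hc b hb (h ▸ hbd')
    · exact map_zero _
  apply_X_pow b := by rw [Finsupp.sum_single_index (by simp), hφ]

theorem isSymbol_algebraMap (a : k) :
    IsSymbol u (Finsupp.single 0 (LaurentPolynomial.C (C a))) (algebraMap k _ a) :=
  isSymbol_single (fun b hb hb0 => by omega) fun b => by simp [evAt_C]

theorem isSymbol_lmul_X : IsSymbol u (Finsupp.single 1 1) (lmul k X) :=
  isSymbol_single (fun b hb hb1 => by omega) fun b => by
    simp [lmul, pow_succ', Int.toNat_natCast_add_one]

theorem dq_apply_X_pow (q : k) (a : ℤ) (b : ℕ) :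
    dq q a (X ^ b) = (∑ i ∈ Finset.range b, q ^ (a * (i : ℤ))) • X ^ (b - 1) := by
  have hX : (X : k[X]) ^ b = Polynomial.basisMonomials k b := by
    simp [Polynomial.X_pow_eq_monomial]
  rw [hX, dq, Module.Basis.constr_basis]

theorem isSymbol_dq_of {a : ℤ} {c : Symb k}
    (hc : ∀ b : ℕ, evAt u b c = ∑ i ∈ Finset.range b, (u : k) ^ (a * (i : ℤ))) :
    IsSymbol u (Finsupp.single (-1) c) (dq u a) := by
  refine isSymbol_single (fun b hb hb1 => ?_) fun b => ?_
  · obtain rfl : b = ((0 : ℕ) : ℤ) := by omega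
    simpa using hc 0
  · rw [dq_apply_X_pow, hc]
    rcases b with _ | b
    · simp
    · congr 2
      omega

theorem isSymbol_dq_zero : IsSymbol u (Finsupp.single (-1) (LaurentPolynomial.C X)) (dq u 0) :=
  isSymbol_dq_of fun b => by simp [evAt_C]

theorem isSymbol_dq {a : ℤ} (ha : (u : k) ^ a ≠ 1) :
    IsSymbol u (Finsupp.single (-1) (LaurentPolynomial.C (C ((u : k) ^ a - 1)⁻¹) *
      (LaurentPolynomial.T a - 1))) (dq u a) :=
  isSymbol_dq_of fun b => by
    have hsum : ∑ i ∈ Finset.range b, (u : k) ^ (a * (i : ℤ)) =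
        ∑ i ∈ Finset.range b, ((u : k) ^ a) ^ i :=
      Finset.sum_congr rfl fun i _ => by rw [zpow_mul, zpow_natCast]
    rw [hsum, geom_sum_eq ha, map_mul, map_sub, evAt_C, evAt_T, map_one, eval_C,
      ← zpow_natCast, ← zpow_mul, ← zpow_mul, mul_comm (b : ℤ) a, div_eq_inv_mul]

end Generators

def symbolic (u : kˣ) : Subalgebra k (Module.End k k[X]) where
  carrier := {φ | ∃ s, IsSymbol u s φ}
  mul_mem' := fun ⟨_, hs⟩ ⟨_, ht⟩ => ⟨_, hs.mul ht⟩
  add_mem' := fun ⟨_, hs⟩ ⟨_, ht⟩ => ⟨_, hs.add ht⟩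
  algebraMap_mem' a := ⟨_, isSymbol_algebraMap a⟩

theorem lmul_mem_symbolic (u : kˣ) (r : k[X]) : lmul k r ∈ symbolic u := by
  have h := Polynomial.aeval_algHom_apply (Algebra.lmul k k[X]) X r
  rw [Polynomial.aeval_X_left_apply] at h
  change Algebra.lmul k k[X] r ∈ _
  rw [← h]
  exact Algebra.adjoin_le (Set.singleton_subset_iff.mpr
    (show lmul k X ∈ symbolic u from ⟨_, isSymbol_lmul_X⟩))
    (Polynomial.aeval_mem_adjoin_singleton k _)

theorem adjoin_le_symbolic {u : kˣ} (hu : ¬IsOfFinOrder u) :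
    Algebra.adjoin k (Set.range (lmul k) ∪ {dq (u : k) (-1), dq (u : k) 0, dq (u : k) 1}) ≤
      symbolic u := by
  have hne : ∀ a : ℤ, a ≠ 0 → (u : k) ^ a ≠ 1 := fun a ha h =>
    ha (zpow_val_injective hu (by simpa using h))
  refine Algebra.adjoin_le (Set.union_subset ?_ ?_)
  · rintro _ ⟨r, rfl⟩
    exact lmul_mem_symbolic u r
  · simp only [Set.insert_subset_iff, Set.singleton_subset_iff]
    exact ⟨⟨_, isSymbol_dq (hne _ (by norm_num))⟩, ⟨_, isSymbol_dq_zero⟩,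
      ⟨_, isSymbol_dq (hne _ one_ne_zero)⟩⟩

/-- Corollary C:Dqdomain: D_q is a domain. -/
theorem stmt11 [CharZero k] (q : k) (hq : Transcendental ℚ q)
    (φ ψ : Module.End k k[X])
    (hφ : φ ∈ Algebra.adjoin k (Set.range (lmul k) ∪ {dq q (-1), dq q 0, dq q 1}))
    (hψ : ψ ∈ Algebra.adjoin k (Set.range (lmul k) ∪ {dq q (-1), dq q 0, dq q 1}))
    (h : φ * ψ = 0) : φ = 0 ∨ ψ = 0 := by
  obtain ⟨u, rfl⟩ : ∃ u : kˣ, (u : k) = q :=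
    ⟨Units.mk0 q fun h0 => hq (h0 ▸ isAlgebraic_zero), rfl⟩
  have hu := hq.not_isOfFinOrder
  obtain ⟨s, hs⟩ := adjoin_le_symbolic hu hφ
  obtain ⟨t, ht⟩ := adjoin_le_symbolic hu hψ
  rw [hs.eq_zero_iff hu, ht.eq_zero_iff hu]
  exact eq_zero_or_eq_zero_of_symbMul_eq_zero hu (((hs.mul ht).eq_zero_iff hu).mp h)

end QDiff1
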